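/- (Conservation of the fractional momentum) Let a < b ≤ t be real numbers, 0 < α < 1, 0 < β < 1, γ ∈ ℂ, and let L : ℝ × ℝ × ℝ → ℝ be continuously differentiable and independent of its second argument, i.e., (∂L/∂q)(u,q,τ) = 0 for all (u,q,τ). Let q : [a,b] → ℝ be a fractional extremal, in the sense that on (a,b) it satisfies D_{−γ;τ}^{β,α}[σ ↦ (∂L/∂u)(D_γ^{α,β} q(σ), q(σ), σ)(t−σ)^{α−1}](τ) = (∂L/∂q)(D_γ^{α,β} q(τ), q(τ), τ)(t−τ)^{α−1}. Then the fractional momentum of order (α,β), p^{α,β}(τ) = −(∂L/∂u)(D_γ^{α,β} q(τ), q(τ), τ)(t−τ)^{α−1}, satisfies D_{−γ;τ}^{β,α} p^{α,β}(τ) = 0 for all τ ∈ (a,b); that is, the fractional momentum is a fractional constant of motion. -/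

import Mathlib

open MeasureTheory Real Set

/-- `t ↦ (1/Γ(1-α)) ∫_a^t f(τ)(t-τ)^{-α} dτ` for a complex-valued `f`. -/
noncomputable def leftKer (a α : ℝ) (f : ℝ → ℂ) (t : ℝ) : ℂ :=
  ((1 / Real.Gamma (1 - α) : ℝ) : ℂ) * ∫ τ in a..t, f τ * (((t - τ) ^ (-α) : ℝ) : ℂ)

/-- Left Riemann–Liouville fractional derivative of order `α ∈ (0,1)`. -/
noncomputable def leftRLD (a α : ℝ) (f : ℝ → ℂ) (t : ℝ) : ℂ :=
  deriv (leftKer a α f) t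

/-- `s ↦ (1/Γ(1-β)) ∫_s^b f(τ)(τ-s)^{-β} dτ` for a complex-valued `f`. -/
noncomputable def rightKer (b β : ℝ) (f : ℝ → ℂ) (s : ℝ) : ℂ :=
  ((1 / Real.Gamma (1 - β) : ℝ) : ℂ) * ∫ τ in s..b, f τ * (((τ - s) ^ (-β) : ℝ) : ℂ)

/-- Right Riemann–Liouville fractional derivative of order `β ∈ (0,1)`. -/
noncomputable def rightRLD (b β : ℝ) (f : ℝ → ℂ) (s : ℝ) : ℂ :=
  - deriv (rightKer b β f) s

/-- The Cresson–Darses fractional derivative operator of order `(α,β)`: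
`D_γ^{α,β} = ½(D_{a+}^α − D_{b-}^β) + (iγ/2)(D_{a+}^α + D_{b-}^β)`. -/
noncomputable def cressonDarses (a b α β : ℝ) (γ : ℂ) (f : ℝ → ℂ) (t : ℝ) : ℂ :=
  (1 / 2 : ℂ) * (leftRLD a α f t - rightRLD b β f t)
    + Complex.I * γ / 2 * (leftRLD a α f t + rightRLD b β f t)

/-! Since `∂L/∂q = 0`, the Euler–Lagrange equation says that `D_{−γ}^{β,α}` annihilates
`−p^{α,β}`; the operator is linear, so it annihilates `p^{α,β}` too. -/

lemma leftRLD_neg (a α : ℝ) (f : ℝ → ℂ) (t : ℝ) :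
    leftRLD a α (fun s => -f s) t = -leftRLD a α f t := by
  have hker : leftKer a α (fun s => -f s) = fun t => -leftKer a α f t := by
    funext t
    simp [leftKer, intervalIntegral.integral_neg]
  rw [leftRLD, leftRLD, hker, deriv.fun_neg]

lemma rightRLD_neg (b β : ℝ) (f : ℝ → ℂ) (s : ℝ) :
    rightRLD b β (fun s => -f s) s = -rightRLD b β f s := by
  have hker : rightKer b β (fun s => -f s) = fun s => -rightKer b β f s := by
    funext s
    simp [rightKer, intervalIntegral.integral_neg]
  rw [rightRLD, rightRLD, hker, deriv.fun_neg]

lemma cressonDarses_neg (a b α β : ℝ) (γ : ℂ) (f : ℝ → ℂ) (t : ℝ) :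
    cressonDarses a b α β γ (fun s => -f s) t = -cressonDarses a b α β γ f t := by
  simp only [cressonDarses, leftRLD_neg, rightRLD_neg]
  ring

theorem fractional_momentum_conservation_general
    (a b t α β : ℝ) (γ : ℂ)
    (L : ℝ → ℝ → ℝ → ℝ)
    -- L does not depend on its second argument: ∂L/∂q = 0 identically:
    (hLq : ∀ u r τ, HasDerivAt (fun q' : ℝ => L u q' τ) 0 r)
    (q v : ℝ → ℝ)
    -- q is a fractional extremal:
    (hextremal : ∀ τ ∈ Ioo a b,
      cressonDarses a b β α (-γ)
        (fun σ => ((deriv (fun u' : ℝ => L u' (q σ) σ) (v σ)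
          * (t - σ) ^ (α - 1) : ℝ) : ℂ)) τ
        = ((deriv (fun q' : ℝ => L (v τ) q' τ) (q τ) * (t - τ) ^ (α - 1) : ℝ) : ℂ)) :
    -- the fractional momentum p^{α,β}(τ) = −(∂L/∂u)(D_γ^{α,β}q(τ),q(τ),τ)(t−τ)^{α−1}
    -- is a fractional constant of motion: D_{−γ;τ}^{β,α} p^{α,β} = 0 on (a,b):
    ∀ τ ∈ Ioo a b,
      cressonDarses a b β α (-γ)
        (fun σ => ((-(deriv (fun u' : ℝ => L u' (q σ) σ) (v σ)
          * (t - σ) ^ (α - 1)) : ℝ) : ℂ)) τ = 0 := by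
  intro τ hτ
  have hLq_deriv : deriv (fun q' : ℝ => L (v τ) q' τ) (q τ) = 0 := (hLq (v τ) (q τ) τ).deriv
  have hEL := hextremal τ hτ
  rw [hLq_deriv, zero_mul, Complex.ofReal_zero] at hEL
  simp only [Complex.ofReal_neg]
  rw [cressonDarses_neg, hEL, neg_zero]

/-- Conservation of the fractional momentum of order `(α,β)`.
If `L` is independent of its second argument and `q` is a fractional extremal (here `v`
denotes the real-valued function representing `D_γ^{α,β} q`, which is assumed to take
real values along the trajectory), then the fractional momentum
`p^{α,β}(τ) = −(∂L/∂u)(D_γ^{α,β}q(τ), q(τ), τ)(t−τ)^{α−1}` satisfies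
`D_{−γ;τ}^{β,α} p^{α,β} = 0` on `(a,b)`: it is a fractional constant of motion. -/
theorem fractional_momentum_conservation
    (a b t α β : ℝ) (hab : a < b) (hbt : b ≤ t)
    (hα : 0 < α) (hα1 : α < 1) (hβ : 0 < β) (hβ1 : β < 1) (γ : ℂ)
    (L : ℝ → ℝ → ℝ → ℝ)
    (hL : ContDiff ℝ 1 fun x : ℝ × ℝ × ℝ => L x.1 x.2.1 x.2.2)
    -- L does not depend on its second argument: ∂L/∂q = 0 identically:
    (hLq : ∀ u r τ, HasDerivAt (fun q' : ℝ => L u q' τ) 0 r)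
    (q v : ℝ → ℝ)
    -- v represents D_γ^{α,β} q (assumed real-valued along the trajectory):
    (hv : ∀ σ, ((v σ : ℝ) : ℂ) = cressonDarses a b α β γ (fun s => (q s : ℂ)) σ)
    -- q is a fractional extremal:
    (hextremal : ∀ τ ∈ Ioo a b,
      cressonDarses a b β α (-γ)
        (fun σ => ((deriv (fun u' : ℝ => L u' (q σ) σ) (v σ)
          * (t - σ) ^ (α - 1) : ℝ) : ℂ)) τ
        = ((deriv (fun q' : ℝ => L (v τ) q' τ) (q τ) * (t - τ) ^ (α - 1) : ℝ) : ℂ)) :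
    -- the fractional momentum p^{α,β}(τ) = −(∂L/∂u)(D_γ^{α,β}q(τ),q(τ),τ)(t−τ)^{α−1}
    -- is a fractional constant of motion: D_{−γ;τ}^{β,α} p^{α,β} = 0 on (a,b):
    ∀ τ ∈ Ioo a b,
      cressonDarses a b β α (-γ)
        (fun σ => ((-(deriv (fun u' : ℝ => L u' (q σ) σ) (v σ)
          * (t - σ) ^ (α - 1)) : ℝ) : ℂ)) τ = 0 :=
  fractional_momentum_conservation_general a b t α β γ L hLq q v hextremal
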